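/- Let S be a real symmetric unreduced tridiagonal N×N matrix with negative off-diagonal entries b_2,...,b_N < 0 and eigenvalues λ_1 = 0 < λ_2 < ... < λ_N (N > 1). If v is a unit eigenvector of S associated with the eigenvalue 0, then all entries of v have the same sign (all strictly positive or all strictly negative). -/

import Mathlib

open Matrix Polynomial

def IsTridiagonal {N : ℕ} (M : Matrix (Fin N) (Fin N) ℝ) : Prop :=
  ∀ i j : Fin N, ((i : ℕ) + 1 < j ∨ (j : ℕ) + 1 < i) → M i j = 0

/-!
A symmetric tridiagonal matrix with negative off-diagonal entries and nonnegative spectrum is a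
positive semidefinite matrix with nonpositive off-diagonal entries whose graph is a path. Replacing
a kernel vector `v` by `|v|` can only lower the quadratic form, which is already at its minimum `0`,
so `|v|`, and hence `|v| - v`, lies in the kernel as well. For a nonnegative kernel vector `u`,
row `k` of `S u = 0` is a sum of nonpositive terms, so `u k = 0` forces `u` to vanish at the
neighbours of `k` and, walking along the path, everywhere. Hence `|v|` has no zero entry, and if
some `v j > 0` then `|v| - v` vanishes at `j`, so `v = |v| > 0`.
-/

namespace Matrix

variable {n : Type*} [Fintype n] {A : Matrix n n ℝ}

theorem posSemidef_of_charpoly_eq_prod [DecidableEq n] (hA : A.IsHermitian) (μ : n → ℝ)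
    (hμ : ∀ i, 0 ≤ μ i) (hchar : A.charpoly = ∏ i, (X - C (μ i))) : A.PosSemidef := by
  refine hA.posSemidef_iff_eigenvalues_nonneg.mpr fun i ↦ ?_
  have hroot : IsRoot A.charpoly (hA.eigenvalues i) :=
    mem_spectrum_iff_isRoot_charpoly.mp (hA.eigenvalues_mem_spectrum_real i)
  rw [hchar, IsRoot, eval_prod, Finset.prod_eq_zero_iff] at hroot
  obtain ⟨j, -, hj⟩ := hroot
  simp only [eval_sub, eval_X, eval_C, sub_eq_zero] at hj
  exact hj ▸ hμ j

theorem abs_dotProduct_mulVec_abs_le (hoff : ∀ i j, i ≠ j → A i j ≤ 0) (v : n → ℝ) :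
    |v| ⬝ᵥ A *ᵥ |v| ≤ v ⬝ᵥ A *ᵥ v := by
  simp only [dotProduct, mulVec, Finset.mul_sum, Pi.abs_apply]
  refine Finset.sum_le_sum fun i _ ↦ Finset.sum_le_sum fun j _ ↦ ?_
  obtain rfl | hij := eq_or_ne i j
  · exact le_of_eq (by linear_combination A i i * abs_mul_abs_self (v i))
  · calc |v i| * (A i j * |v j|) = A i j * |v i * v j| := by rw [abs_mul]; ring
      _ ≤ A i j * (v i * v j) := mul_le_mul_of_nonpos_left (le_abs_self _) (hoff i j hij)
      _ = v i * (A i j * v j) := by ring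

theorem PosSemidef.mulVec_abs_eq_zero (hA : A.PosSemidef) (hoff : ∀ i j, i ≠ j → A i j ≤ 0)
    {v : n → ℝ} (hv : A *ᵥ v = 0) : A *ᵥ |v| = 0 := by
  refine (hA.dotProduct_mulVec_zero_iff |v|).mp (le_antisymm ?_ (hA.dotProduct_mulVec_nonneg _))
  simpa [hv] using abs_dotProduct_mulVec_abs_le hoff v

theorem eq_zero_of_mulVec_eq_zero_of_lt_zero (hoff : ∀ i j, i ≠ j → A i j ≤ 0)
    {u : n → ℝ} (hu : A *ᵥ u = 0) (hu0 : 0 ≤ u) {k j : n} (hk : u k = 0) (hkj : A k j < 0) :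
    u j = 0 := by
  have hsum : ∑ l, A k l * u l = 0 := congrFun hu k
  have hterm : ∀ l ∈ Finset.univ, A k l * u l ≤ 0 := fun l _ ↦ by
    obtain rfl | hkl := eq_or_ne k l
    · simp [hk]
    · exact mul_nonpos_of_nonpos_of_nonneg (hoff k l hkl) (hu0 l)
  have hj := (Finset.sum_eq_zero_iff_of_nonpos hterm).mp hsum j (Finset.mem_univ j)
  exact (mul_eq_zero.mp hj).resolve_left hkj.ne

theorem eq_zero_of_mulVec_eq_zero_of_preconnected {G : SimpleGraph n} (hG : G.Preconnected)
    (hadj : ∀ i j, G.Adj i j → A i j < 0) (hoff : ∀ i j, i ≠ j → A i j ≤ 0)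
    {u : n → ℝ} (hu : A *ᵥ u = 0) (hu0 : 0 ≤ u) {k : n} (hk : u k = 0) : u = 0 := by
  funext j
  obtain ⟨p⟩ := hG k j
  induction p with
  | nil => exact hk
  | cons h _ ih => exact ih (eq_zero_of_mulVec_eq_zero_of_lt_zero hoff hu hu0 hk (hadj _ _ h))

theorem pos_or_neg_of_mulVec_eq_zero {G : SimpleGraph n} (hG : G.Preconnected)
    (hadj : ∀ i j, G.Adj i j → A i j < 0) (hoff : ∀ i j, i ≠ j → A i j ≤ 0)
    (hA : A.PosSemidef) {v : n → ℝ} (hv : A *ᵥ v = 0) (hv0 : v ≠ 0) :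
    (∀ i, 0 < v i) ∨ (∀ i, v i < 0) := by
  have habs : A *ᵥ |v| = 0 := hA.mulVec_abs_eq_zero hoff hv
  have hne : ∀ i, v i ≠ 0 := fun i hi ↦ by
    have habs0 : |v| = 0 :=
      eq_zero_of_mulVec_eq_zero_of_preconnected hG hadj hoff habs (abs_nonneg v) (k := i)
        (by simp [hi])
    exact hv0 (funext fun j ↦ abs_eq_zero.mp (congrFun habs0 j))
  by_cases hpos : ∃ j, 0 < v j
  · obtain ⟨j, hj⟩ := hpos
    have hdiff : |v| - v = 0 :=
      eq_zero_of_mulVec_eq_zero_of_preconnected hG hadj hoff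
        (by rw [mulVec_sub, habs, hv, sub_zero]) (sub_nonneg.mpr (le_abs_self v)) (k := j)
        (by simp [abs_of_pos hj])
    refine Or.inl fun i ↦ ?_
    rw [← congrFun (sub_eq_zero.mp hdiff) i, Pi.abs_apply]
    exact abs_pos.mpr (hne i)
  · simp only [not_exists, not_lt] at hpos
    exact Or.inr fun i ↦ (hpos i).lt_of_ne (hne i)

end Matrix

theorem IsTridiagonal.apply_nonpos_of_ne {N : ℕ} {S : Matrix (Fin N) (Fin N) ℝ} (hS : S.IsSymm)
    (htri : IsTridiagonal S) (hneg : ∀ i j : Fin N, (i : ℕ) + 1 = j → S i j < 0)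
    {i j : Fin N} (hij : i ≠ j) : S i j ≤ 0 := by
  have hij' : (i : ℕ) ≠ j := Fin.val_ne_of_ne hij
  rcases lt_trichotomy ((i : ℕ) + 1) j with h | h | h
  · exact (htri i j (Or.inl h)).le
  · exact (hneg i j h).le
  rcases lt_trichotomy ((j : ℕ) + 1) i with h' | h' | h'
  · exact (htri i j (Or.inr h')).le
  · exact hS.apply j i ▸ (hneg j i h').le
  · omega

/-- For a real symmetric unreduced tridiagonal matrix with negative off-diagonal
entries and eigenvalues `0 = λ₁ < λ₂ < ... < λ_N` (N > 1), the entries of a unit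
eigenvector associated to the eigenvalue 0 all have the same (strict) sign. -/
theorem stmt7 {N : ℕ} (hN : 1 < N) (S : Matrix (Fin N) (Fin N) ℝ)
    (hS : S.IsSymm) (htri : IsTridiagonal S)
    (hneg : ∀ i j : Fin N, (i : ℕ) + 1 = j → S i j < 0)
    (μ : Fin N → ℝ) (hμ : StrictMono μ) (hμ0 : μ ⟨0, by omega⟩ = 0)
    (hchar : S.charpoly = ∏ i, (X - C (μ i)))
    (v : Fin N → ℝ) (hv : S.mulVec v = 0) (hunit : ∑ i, v i ^ 2 = 1) :
    (∀ i, 0 < v i) ∨ (∀ i, v i < 0) := by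
  have hherm : S.IsHermitian := by ext i j; exact hS.apply i j
  have hpsd : S.PosSemidef := posSemidef_of_charpoly_eq_prod hherm μ
    (fun i ↦ hμ0 ▸ hμ.monotone (Nat.zero_le (i : ℕ))) hchar
  have hadj : ∀ i j, (SimpleGraph.pathGraph N).Adj i j → S i j < 0 := by
    intro i j h
    rcases SimpleGraph.pathGraph_adj.mp h with h | h
    · exact hneg i j h
    · exact hS.apply i j ▸ hneg j i h
  have hv0 : v ≠ 0 := by rintro rfl; simp at hunit
  exact pos_or_neg_of_mulVec_eq_zero (SimpleGraph.pathGraph_preconnected N) hadj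
    (fun i j ↦ htri.apply_nonpos_of_ne hS hneg) hpsd hv hv0
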